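/- Let g(λ) = (λ − sin λ)/(8 sin(λ/2)²). Then on each interval (2kπ, 2(k+1)π) with k ≥ 0, g is strictly convex. -/

import Mathlib

/-!
With `s = sin (x/2)` one computes `g' = (2s - x cos (x/2)) / (8 s³)` and
`g'' = (x (2 + cos x) - 3 sin x) / (16 s⁴)`. The numerator is positive for every `x > 0` by the
Cusa–Huygens inequality `3 sin x < x (2 + cos x)`: trivially for `x > π`, and on `(0, π]` because
the right side minus the left has derivative `2s (2s - x cos (x/2)) > 0` there, as `x/2 < tan (x/2)`.
-/

open Real Set Filter Topology

noncomputable def g (l : ℝ) : ℝ := (l - Real.sin l) / (8 * (Real.sin (l / 2)) ^ 2)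

lemma sin_eq_two_mul_sin_half_mul_cos_half (x : ℝ) : sin x = 2 * sin (x / 2) * cos (x / 2) := by
  rw [← sin_two_mul, mul_div_cancel₀ x two_ne_zero]

lemma cos_eq_one_sub_two_mul_sin_half_sq (x : ℝ) : cos x = 1 - 2 * sin (x / 2) ^ 2 := by
  rw [← cos_two_mul_eq_one_sub, mul_div_cancel₀ x two_ne_zero]

lemma sin_ne_zero_of_mem_Ioo {k : ℤ} {x : ℝ} (hx : x ∈ Ioo (k * π) ((k + 1) * π)) :
    sin x ≠ 0 := by
  refine sin_ne_zero_iff.2 fun n hn => ?_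
  subst hn
  have h₁ : (k : ℝ) < n := lt_of_mul_lt_mul_right hx.1 pi_pos.le
  have h₂ : (n : ℝ) < k + 1 := lt_of_mul_lt_mul_right hx.2 pi_pos.le
  norm_cast at h₁ h₂
  omega

lemma mul_cos_lt_sin {x : ℝ} (h₀ : 0 < x) (h₁ : x < π / 2) : x * cos x < sin x := by
  have hcos : 0 < cos x := cos_pos_of_mem_Ioo ⟨by linarith [pi_pos], h₁⟩
  have htan := lt_tan h₀ h₁
  rwa [tan_eq_sin_div_cos, lt_div_iff₀ hcos] at htan

lemma three_mul_sin_lt_mul_two_add_cos {x : ℝ} (hx : 0 < x) : 3 * sin x < x * (2 + cos x) := by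
  rcases lt_or_ge π x with hπ | hπ
  · nlinarith [pi_gt_three, neg_one_le_cos x, sin_le_one x]
  set φ : ℝ → ℝ := fun v => v * (2 + cos v) - 3 * sin v
  have hφ' (v : ℝ) : HasDerivAt φ (2 - 2 * cos v - v * sin v) v := by
    refine (((hasDerivAt_id' v).mul ((hasDerivAt_cos v).const_add 2)).sub
      ((hasDerivAt_sin v).const_mul 3)).congr_deriv ?_
    ring
  have hmono : StrictMonoOn φ (Icc 0 π) := by
    refine strictMonoOn_of_deriv_pos (convex_Icc 0 π) (by fun_prop) fun v hv => ?_
    rw [interior_Icc] at hv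
    have hs : 0 < sin (v / 2) := sin_pos_of_pos_of_lt_pi (by linarith [hv.1]) (by linarith [hv.2])
    have hlt := mul_cos_lt_sin (x := v / 2) (by linarith [hv.1]) (by linarith [hv.2])
    rw [(hφ' v).deriv, cos_eq_one_sub_two_mul_sin_half_sq v, sin_eq_two_mul_sin_half_mul_cos_half v]
    nlinarith
  have := hmono ⟨le_rfl, pi_pos.le⟩ ⟨hx.le, hπ⟩ hx
  simp only [φ, zero_mul, sin_zero, mul_zero, sub_zero] at this
  linarith

lemma hasDerivAt_sin_half (x : ℝ) :
    HasDerivAt (fun y => sin (y / 2)) (cos (x / 2) / 2) x :=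
  ((hasDerivAt_id' x).div_const 2).sin.congr_deriv (by ring)

lemma hasDerivAt_cos_half (x : ℝ) :
    HasDerivAt (fun y => cos (y / 2)) (-sin (x / 2) / 2) x :=
  ((hasDerivAt_id' x).div_const 2).cos.congr_deriv (by ring)

noncomputable def g' (x : ℝ) : ℝ := (2 * sin (x / 2) - x * cos (x / 2)) / (8 * sin (x / 2) ^ 3)

noncomputable def g'' (x : ℝ) : ℝ := (x * (2 + cos x) - 3 * sin x) / (16 * sin (x / 2) ^ 4)

section

variable {x : ℝ}

lemma hasDerivAt_g (hx : sin (x / 2) ≠ 0) : HasDerivAt g (g' x) x := by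
  have hN := (hasDerivAt_id' x).sub (hasDerivAt_sin x)
  have hD := ((hasDerivAt_sin_half x).pow 2).const_mul 8
  have hD₀ : 8 * sin (x / 2) ^ 2 ≠ 0 := by positivity
  refine (hN.div hD hD₀).congr_deriv ?_
  simp only [Pi.sub_apply, Pi.pow_apply]
  rw [g', sin_eq_two_mul_sin_half_mul_cos_half x, cos_eq_one_sub_two_mul_sin_half_sq x]
  field_simp
  linear_combination 4 * sin (x / 2) ^ 2 * sin_sq_add_cos_sq (x / 2)

lemma hasDerivAt_g' (hx : sin (x / 2) ≠ 0) : HasDerivAt g' (g'' x) x := by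
  have hN := ((hasDerivAt_sin_half x).const_mul 2).sub
    ((hasDerivAt_id' x).mul (hasDerivAt_cos_half x))
  have hD := ((hasDerivAt_sin_half x).pow 3).const_mul 8
  have hD₀ : 8 * sin (x / 2) ^ 3 ≠ 0 := by positivity
  refine (hN.div hD hD₀).congr_deriv ?_
  simp only [Pi.sub_apply, Pi.mul_apply, Pi.pow_apply]
  rw [g'', sin_eq_two_mul_sin_half_mul_cos_half x, cos_eq_one_sub_two_mul_sin_half_sq x]
  field_simp
  linear_combination 48 * x * sin (x / 2) ^ 2 * sin_sq_add_cos_sq (x / 2)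

lemma deriv_deriv_g (hx : sin (x / 2) ≠ 0) : deriv (deriv g) x = g'' x := by
  have hopen : IsOpen {y : ℝ | sin (y / 2) ≠ 0} := isOpen_ne_fun (by fun_prop) continuous_const
  have hderiv : deriv g =ᶠ[𝓝 x] g' := by
    filter_upwards [hopen.mem_nhds hx] with y hy using (hasDerivAt_g hy).deriv
  rw [hderiv.deriv_eq, (hasDerivAt_g' hx).deriv]

lemma g''_pos (hx : 0 < x) (hs : sin (x / 2) ≠ 0) : 0 < g'' x :=
  div_pos (by linarith [three_mul_sin_lt_mul_two_add_cos hx]) (by positivity)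

end

theorem g_strictConvexOn (k : ℕ) :
    StrictConvexOn ℝ (Set.Ioo (2 * k * Real.pi) (2 * (k + 1) * Real.pi)) g := by
  have hs : ∀ x ∈ Ioo (2 * k * π) (2 * (k + 1) * π), sin (x / 2) ≠ 0 := fun x hx =>
    sin_ne_zero_of_mem_Ioo (k := k) ⟨by push_cast; linarith [hx.1], by push_cast; linarith [hx.2]⟩
  refine strictConvexOn_of_deriv2_pos (convex_Ioo _ _)
    (fun x hx => (hasDerivAt_g (hs x hx)).continuousAt.continuousWithinAt) fun x hx => ?_
  rw [interior_Ioo] at hx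
  have hx₀ : 0 < x := lt_of_le_of_lt (by positivity) hx.1
  show 0 < deriv (deriv g) x
  rw [deriv_deriv_g (hs x hx)]
  exact g''_pos hx₀ (hs x hx)
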